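/- arXiv:2403.17251 — 3 statements merged into one kernel-verified Lean document; each statement's English description precedes it below -/
import Mathlib

section
/- (Minkowski's lemma) Let n be a positive integer, p an odd prime, and A ∈ GL_n(Z) a matrix of finite order such that A is congruent to the identity matrix modulo p (i.e., every entry of A − I is divisible by p). Then A = I. -/
/-!
If `A ≠ 1` has finite order, some power `B` of `A` has prime order `q`, and still `B ≡ 1 (mod p)`.
Writing `B = 1 + p^m Y` and expanding `(1 + p^m Y)^q = 1` binomially, after cancelling `p^m` one
gets `q Y ≡ 0 (mod p)` if `q ≠ p`, and `p Y ≡ 0 (mod p^2)` if `q = p`; the latter uses that `p` is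
odd, so that the last term `p^(m(p-1)) Y^p` is divisible by `p^(m+2)`. Either way `p ∣ Y`, so
`B - 1` is divisible by every power of `p`, hence `B = 1`: a contradiction.
-/

open Finset

section Ring

variable {R : Type*} [Ring R]

lemma natCast_mul_right_injective [IsAddTorsionFree R] {c : ℕ} (hc : c ≠ 0) :
    Function.Injective ((c : R) * ·) := by
  simpa only [nsmul_eq_mul] using nsmul_right_injective (M := R) hc

-- `q.choose (k + 1) * c ^ k` is the coefficient of `Y ^ (k + 1)` in `((1 + c Y) ^ q - 1) / c`.
lemma natCast_dvd_mul_of_one_add_mul_pow_eq_one [IsAddTorsionFree R] {c d q : ℕ} (hc : c ≠ 0)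
    (hq : q ≠ 0) (hd : ∀ k, 1 ≤ k → d ∣ q.choose (k + 1) * c ^ k) {Y : R}
    (h : (1 + c * Y) ^ q = 1) : (d : R) ∣ q * Y := by
  have hexp : (1 + c * Y) ^ q =
      1 + c * ∑ k ∈ range q, ((q.choose (k + 1) * c ^ k : ℕ) : R) * Y ^ (k + 1) := by
    rw [add_comm, (Commute.one_right _).add_pow, sum_range_succ', mul_sum, add_comm]
    congr 1
    · simp
    refine sum_congr rfl fun k _ => ?_
    rw [one_pow, mul_one, (Nat.cast_commute c Y).mul_pow, mul_assoc, ← Nat.cast_comm,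
      ← mul_assoc, ← mul_assoc, ← Nat.cast_pow, ← Nat.cast_mul, ← Nat.cast_mul]
    congr 2
    ring
  have hsum : ∑ k ∈ range q, ((q.choose (k + 1) * c ^ k : ℕ) : R) * Y ^ (k + 1) = 0 :=
    natCast_mul_right_injective hc (by simpa [hexp] using h)
  obtain ⟨r, rfl⟩ := Nat.exists_eq_succ_of_ne_zero hq
  rw [sum_range_succ'] at hsum
  have hqY : ((r + 1 : ℕ) : R) * Y =
      -∑ k ∈ range r, (((r + 1).choose (k + 2) * c ^ (k + 1) : ℕ) : R) * Y ^ (k + 2) := by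
    rw [eq_neg_iff_add_eq_zero, ← hsum, add_comm]
    simp
  rw [hqY]
  exact dvd_neg.2 (dvd_sum fun k _ => (Nat.cast_dvd_cast (hd (k + 1) le_add_self)).mul_right _)

lemma natCast_dvd_of_dvd_natCast_mul {p q : ℕ} (hpq : p.Coprime q) {Y : R}
    (h : (p : R) ∣ q * Y) : (p : R) ∣ Y := by
  obtain ⟨u, v, huv⟩ := Nat.Coprime.isCoprime hpq
  obtain ⟨Z, hZ⟩ := h
  refine ⟨u * Y + v * Z, ?_⟩
  calc Y = ((u * p + v * q : ℤ) : R) * Y := by rw [huv, Int.cast_one, one_mul]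
    _ = p * (u * Y + v * Z) := by
      push_cast
      rw [add_mul, mul_assoc (v : R), hZ, mul_add, ← mul_assoc (v : R), ← mul_assoc (p : R),
        ← mul_assoc (p : R), Int.cast_comm u (p : R), Int.cast_comm v (p : R)]

lemma natCast_dvd_of_one_add_pow_mul_pow_eq_one [IsAddTorsionFree R] {p q m : ℕ}
    (hp : p.Prime) (hp2 : p ≠ 2) (hq : q.Prime) (hm : m ≠ 0) {Y : R}
    (h : (1 + (p : R) ^ m * Y) ^ q = 1) : (p : R) ∣ Y := by
  rw [← Nat.cast_pow] at h
  have hc : p ^ m ≠ 0 := pow_ne_zero _ hp.ne_zero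
  by_cases hpq : p = q
  · subst hpq
    have hd : ∀ k, 1 ≤ k → p ^ 2 ∣ p.choose (k + 1) * (p ^ m) ^ k := by
      intro k hk
      rcases lt_trichotomy (k + 1) p with hlt | heq | hgt
      · rw [sq]
        exact mul_dvd_mul (hp.dvd_choose_self (by omega) hlt)
          (dvd_pow (dvd_pow_self p hm) (by omega))
      · have hk2 : 2 ≤ k := by have := hp.two_le; omega
        rw [heq, Nat.choose_self, one_mul, ← pow_mul]
        exact pow_dvd_pow p (hk2.trans (Nat.le_mul_of_pos_left k (Nat.pos_of_ne_zero hm)))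
      · rw [Nat.choose_eq_zero_of_lt hgt, zero_mul]
        exact dvd_zero _
    obtain ⟨Z, hZ⟩ := natCast_dvd_mul_of_one_add_mul_pow_eq_one hc hp.ne_zero hd h
    refine ⟨Z, natCast_mul_right_injective hp.ne_zero ?_⟩
    simp only [hZ, sq, Nat.cast_mul, mul_assoc]
  · have hd : ∀ k, 1 ≤ k → p ∣ q.choose (k + 1) * (p ^ m) ^ k := fun k hk =>
      dvd_mul_of_dvd_right (dvd_pow (dvd_pow_self p hm) (by omega)) _
    exact natCast_dvd_of_dvd_natCast_mul ((Nat.coprime_primes hp hq).2 hpq)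
      (natCast_dvd_mul_of_one_add_mul_pow_eq_one hc hq.ne_zero hd h)

lemma natCast_pow_dvd_of_one_add_pow_eq_one [IsAddTorsionFree R] {p q : ℕ}
    (hp : p.Prime) (hp2 : p ≠ 2) (hq : q.Prime) {X : R} (hX : (p : R) ∣ X)
    (h : (1 + X) ^ q = 1) (m : ℕ) : (p : R) ^ m ∣ X := by
  suffices ∀ m, (p : R) ^ (m + 1) ∣ X from (pow_dvd_pow _ m.le_succ).trans (this m)
  intro m
  induction m with
  | zero => simpa using hX
  | succ m ih =>
    obtain ⟨Y, rfl⟩ := ih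
    rw [pow_succ _ (m + 1)]
    exact mul_dvd_mul_left _ (natCast_dvd_of_one_add_pow_mul_pow_eq_one hp hp2 hq m.succ_ne_zero h)

end Ring

instance Matrix.instIsAddTorsionFree {m n α : Type*} [AddMonoid α] [IsAddTorsionFree α] :
    IsAddTorsionFree (Matrix m n α) :=
  Pi.instIsAddTorsionFree

namespace Matrix

variable {n : Type*} [Fintype n] [DecidableEq n]

lemma natCast_dvd_iff {α : Type*} [CommSemiring α] {c : ℕ} {X : Matrix n n α} :
    (c : Matrix n n α) ∣ X ↔ ∀ i j, (c : α) ∣ X i j := by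
  constructor
  · rintro ⟨Y, rfl⟩ i j
    rw [← diagonal_natCast, diagonal_mul]
    exact dvd_mul_right _ _
  · intro h
    choose Y hY using h
    refine ⟨Matrix.of Y, ?_⟩
    ext i j
    rw [← diagonal_natCast, diagonal_mul, of_apply, hY]

lemma eq_zero_of_forall_natCast_pow_dvd {p : ℕ} (hp : 1 < p) {X : Matrix n n ℤ}
    (h : ∀ m, (p : Matrix n n ℤ) ^ m ∣ X) : X = 0 := by
  ext i j
  have hdvd : ((p ^ (X i j).natAbs : ℕ) : ℤ) ∣ X i j :=
    natCast_dvd_iff.1 (by simpa only [Nat.cast_pow] using h (X i j).natAbs) i j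
  exact Int.eq_zero_of_dvd_of_natAbs_lt_natAbs hdvd (by simpa using Nat.lt_pow_self hp)

end Matrix

theorem eq_one_of_finite_order_of_congruent_one_general (n : ℕ)
    (p : ℕ) (hp : p.Prime) (hodd : Odd p)
    (A : GL (Fin n) ℤ)
    (hfin : ∃ k : ℕ, 0 < k ∧ A ^ k = 1)
    (hcong : ∀ i j, (p : ℤ) ∣ ((A : Matrix (Fin n) (Fin n) ℤ) - 1) i j) :
    A = 1 := by
  obtain ⟨k, hk, hAk⟩ := hfin
  by_contra hA
  have hord : orderOf A ≠ 0 := (isOfFinOrder_iff_pow_eq_one.2 ⟨k, hk, hAk⟩).orderOf_pos.ne'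
  set q := (orderOf A).minFac
  have hq : q.Prime := Nat.minFac_prime (by rwa [Ne, orderOf_eq_one_iff])
  set B := A ^ (orderOf A / q)
  have hBq : orderOf B = q := orderOf_pow_orderOf_div hord (Nat.minFac_dvd _)
  have hBcong : (p : Matrix (Fin n) (Fin n) ℤ) ∣ (B : Matrix (Fin n) (Fin n) ℤ) - 1 :=
    (Matrix.natCast_dvd_iff.2 hcong).trans <| by
      simpa [B] using (Commute.one_right (A : Matrix (Fin n) (Fin n) ℤ)).sub_dvd_pow_sub_pow _
  have hBpow : (1 + ((B : Matrix (Fin n) (Fin n) ℤ) - 1)) ^ q = 1 := by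
    rw [add_sub_cancel, ← Units.val_pow_eq_pow_val, ← hBq, pow_orderOf_eq_one, Units.val_one]
  have hB : (B : Matrix (Fin n) (Fin n) ℤ) = 1 :=
    sub_eq_zero.1 <| Matrix.eq_zero_of_forall_natCast_pow_dvd hp.one_lt <|
      natCast_pow_dvd_of_one_add_pow_eq_one hp (hodd.ne_two_of_dvd_nat dvd_rfl) hq hBcong hBpow
  exact hq.ne_one (hBq ▸ orderOf_eq_one_iff.2 (Units.ext hB))

/-- Minkowski's lemma: a finite-order element of `GLₙ(ℤ)` congruent to the identity
modulo an odd prime `p` is the identity. -/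
theorem eq_one_of_finite_order_of_congruent_one (n : ℕ) (hn : 0 < n)
    (p : ℕ) (hp : p.Prime) (hodd : Odd p)
    (A : GL (Fin n) ℤ)
    (hfin : ∃ k : ℕ, 0 < k ∧ A ^ k = 1)
    (hcong : ∀ i j, (p : ℤ) ∣ ((A : Matrix (Fin n) (Fin n) ℤ) - 1) i j) :
    A = 1 :=
  eq_one_of_finite_order_of_congruent_one_general n p hp hodd A hfin hcong
end

section
/- Every finite subgroup of GL_n(Z) has order at most |GL_n(Z/3)| = ∏_{i=0}^{n-1} (3^n − 3^i). -/
/-!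
Minkowski's argument. If `A ∈ GLₙ(ℤ)` has prime order `p` and `A ≡ 1 (mod ℓ)` for an odd prime `ℓ`,
write `A = 1 + ℓᵏ B` with `k ≥ 1`. Expanding `(1 + ℓᵏ B)ᵖ = 1` to third order and cancelling `ℓᵏ`
gives `p B ≡ 0 (mod ℓ)` when `p ≠ ℓ` and `ℓ B ≡ 0 (mod ℓ²)` when `p = ℓ` (here `ℓ ∣ (ℓ choose 2)`
because `ℓ` is odd), so in both cases `ℓ ∣ B`. Hence `ℓᵏ ∣ A - 1` for every `k`, i.e. `A = 1`.
So reduction mod `ℓ` is injective on finite subgroups, and `|GLₙ(ℤ/3)|` bounds their order.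
-/

open Polynomial in
theorem exists_one_add_pow_eq {R : Type*} [Ring R] (x : R) (n : ℕ) :
    ∃ y : R, (1 + x) ^ n = 1 + n • x + n.choose 2 • x ^ 2 + x ^ 3 * y := by
  obtain ⟨q, hq⟩ : (X : ℤ[X]) ^ 3 ∣ (1 + X) ^ n - 1 - n • X - n.choose 2 • X ^ 2 := by
    refine X_pow_dvd_iff.2 fun d hd => ?_
    interval_cases d <;> simp [coeff_one_add_X_pow, coeff_X, coeff_one]
  refine ⟨aeval x q, ?_⟩
  have hq' := congrArg (aeval x) hq
  simp only [map_sub, map_pow, map_add, map_one, aeval_X, map_nsmul, map_mul] at hq'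
  rw [← hq']
  abel

section CongruentToOne

variable {R : Type*} [Ring R] [IsAddTorsionFree R] {ℓ p : ℕ}

theorem exists_eq_one_add_pow_succ_smul_of_pow_eq_one (hℓ : ℓ.Prime) (hℓ2 : ℓ ≠ 2)
    (hp : p.Prime) {A B : R} {k : ℕ} (hk : k ≠ 0) (hA : A ^ p = 1) (hB : A = 1 + ℓ ^ k • B) :
    ∃ C, A = 1 + ℓ ^ (k + 1) • C := by
  obtain ⟨y, hy⟩ := exists_one_add_pow_eq (ℓ ^ k • B) p
  have hexpand : p • B + (p.choose 2 * ℓ ^ k) • B ^ 2 + ℓ ^ (2 * k) • (B ^ 3 * y) = 0 := by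
    apply nsmul_right_injective (pow_ne_zero k hℓ.ne_zero)
    rw [hB, hy, smul_pow, smul_pow, smul_mul_assoc, add_assoc, add_assoc, add_eq_left] at hA
    simp only [smul_zero]
    rw [← hA]
    module
  suffices ∃ C, B = ℓ • C by
    obtain ⟨C, rfl⟩ := this
    exact ⟨C, by rw [hB, smul_smul, pow_succ]⟩
  obtain ⟨j, rfl⟩ := Nat.exists_eq_add_one_of_ne_zero hk
  rcases eq_or_ne p ℓ with rfl | hpℓ
  · obtain ⟨c, hc⟩ := hp.dvd_choose_self two_ne_zero (hp.two_le.lt_of_ne' hℓ2)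
    rw [hc] at hexpand
    have hB' : B + (c * p ^ (j + 1)) • B ^ 2 + p ^ (2 * j + 1) • (B ^ 3 * y) = 0 := by
      refine nsmul_right_injective hp.ne_zero ?_
      linear_combination (norm := module) hexpand
    refine ⟨-((c * p ^ j) • B ^ 2 + p ^ (2 * j) • (B ^ 3 * y)), ?_⟩
    linear_combination (norm := module) hB'
  · obtain ⟨a, b, hab⟩ := (Nat.coprime_primes hℓ hp |>.2 hpℓ.symm).isCoprime
    refine ⟨a • B - b • ((p.choose 2 * ℓ ^ j) • B ^ 2 + ℓ ^ (2 * j + 1) • (B ^ 3 * y)), ?_⟩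
    linear_combination (norm := module) b • hexpand - hab • B

theorem exists_eq_one_add_pow_smul_of_pow_eq_one (hℓ : ℓ.Prime) (hℓ2 : ℓ ≠ 2) (hp : p.Prime)
    {A : R} (hA : A ^ p = 1) (h : ∃ B, A = 1 + ℓ • B) (k : ℕ) : ∃ B, A = 1 + ℓ ^ k • B := by
  induction k with
  | zero => exact ⟨A - 1, by simp⟩
  | succ k ih =>
    rcases eq_or_ne k 0 with rfl | hk
    · simpa using h
    · obtain ⟨B, hB⟩ := ih
      exact exists_eq_one_add_pow_succ_smul_of_pow_eq_one hℓ hℓ2 hp hk hA hB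

end CongruentToOne

namespace Matrix

variable {ι : Type*} [Fintype ι] [DecidableEq ι] {ℓ : ℕ}

instance {m n R : Type*} [AddMonoid R] [IsAddTorsionFree R] : IsAddTorsionFree (Matrix m n R) :=
  inferInstanceAs (IsAddTorsionFree (m → n → R))

theorem eq_zero_of_forall_exists_eq_pow_smul {m n : Type*} (hℓ : ℓ ≠ 1) {M : Matrix m n ℤ}
    (h : ∀ k, ∃ B, M = ℓ ^ k • B) : M = 0 := by
  ext i j
  by_contra hij
  obtain ⟨k, hk⟩ := (Int.finiteMultiplicity_iff (a := ℓ)).2 ⟨by simpa using hℓ, hij⟩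
  obtain ⟨B, rfl⟩ := h (k + 1)
  exact hk ⟨B i j, by simp⟩

theorem exists_eq_one_add_smul_of_mapMatrix_eq_one {A : Matrix ι ι ℤ}
    (h : (Int.castRingHom (ZMod ℓ)).mapMatrix A = 1) : ∃ B, A = 1 + ℓ • B := by
  have hdvd (i j : ι) : (ℓ : ℤ) ∣ (A - 1) i j := by
    rw [← ZMod.intCast_zmod_eq_zero_iff_dvd]
    simpa [h] using congrFun₂ (map_sub (Int.castRingHom (ZMod ℓ)).mapMatrix A 1) i j
  choose B hB using hdvd
  exact ⟨of B, by ext i j; simp [← hB]⟩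

theorem eq_one_of_pow_eq_one_of_mapMatrix_eq_one (hℓ : ℓ.Prime) (hℓ2 : ℓ ≠ 2) {p : ℕ}
    (hp : p.Prime) {A : Matrix ι ι ℤ} (hA : A ^ p = 1)
    (h : (Int.castRingHom (ZMod ℓ)).mapMatrix A = 1) : A = 1 := by
  have hdvd := exists_eq_one_add_pow_smul_of_pow_eq_one hℓ hℓ2 hp hA
    (exists_eq_one_add_smul_of_mapMatrix_eq_one h)
  refine sub_eq_zero.1 (eq_zero_of_forall_exists_eq_pow_smul hℓ.ne_one fun k => ?_)
  obtain ⟨B, hB⟩ := hdvd k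
  exact ⟨B, by rw [hB, add_sub_cancel_left]⟩

namespace GeneralLinearGroup

theorem eq_one_of_isOfFinOrder_of_map_eq_one (hℓ : ℓ.Prime) (hℓ2 : ℓ ≠ 2) {g : GL ι ℤ}
    (hg : IsOfFinOrder g) (h : map (Int.castRingHom (ZMod ℓ)) g = 1) : g = 1 := by
  by_contra hg1
  have hN : orderOf g ≠ 0 := hg.orderOf_pos.ne'
  have hp : (orderOf g).minFac.Prime := Nat.minFac_prime (mt orderOf_eq_one_iff.1 hg1)
  set g' := g ^ (orderOf g / (orderOf g).minFac)
  have hg' : orderOf g' = (orderOf g).minFac := orderOf_pow_orderOf_div hN (Nat.minFac_dvd _)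
  have hg'1 : (g' : Matrix ι ι ℤ) = 1 := by
    refine eq_one_of_pow_eq_one_of_mapMatrix_eq_one hℓ hℓ2 hp ?_ ?_
    · rw [← Units.val_pow_eq_pow_val, ← hg', pow_orderOf_eq_one, Units.val_one]
    · have hmap : map (Int.castRingHom (ZMod ℓ)) g' = 1 := by rw [map_pow, h, one_pow]
      exact congrArg Units.val hmap
  rw [Units.ext (hg'1.trans Units.val_one.symm), orderOf_one] at hg'
  exact hp.ne_one hg'.symm

theorem card_le_card_GL_zmod_of_finite (hℓ : ℓ.Prime) (hℓ2 : ℓ ≠ 2) (H : Subgroup (GL ι ℤ))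
    [Finite H] :
    Nat.card H ≤ Nat.card (GL ι (ZMod ℓ)) := by
  have : NeZero ℓ := ⟨hℓ.ne_zero⟩
  refine Nat.card_le_card_of_injective ((map (Int.castRingHom (ZMod ℓ))).comp H.subtype) ?_
  refine (injective_iff_map_eq_one _).2 fun g hg => Subtype.ext ?_
  exact eq_one_of_isOfFinOrder_of_map_eq_one hℓ hℓ2
    (H.subtype.isOfFinOrder (isOfFinOrder_of_finite g)) hg

end GeneralLinearGroup

end Matrix

/-- Every finite subgroup of `GLₙ(ℤ)` has order at most
`|GLₙ(ℤ/3)| = ∏_{i=0}^{n-1} (3^n - 3^i)`. -/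
theorem card_finite_subgroup_GL_int_le (n : ℕ) (H : Subgroup (GL (Fin n) ℤ)) [Finite H] :
    Nat.card H ≤ Nat.card (GL (Fin n) (ZMod 3)) ∧
    Nat.card (GL (Fin n) (ZMod 3)) = ∏ i ∈ Finset.range n, (3 ^ n - 3 ^ i) := by
  refine ⟨Matrix.GeneralLinearGroup.card_le_card_GL_zmod_of_finite Nat.prime_three (by decide) H,
    ?_⟩
  rw [Matrix.card_GL_field, ZMod.card, Fin.prod_univ_eq_prod_range (fun i => 3 ^ n - 3 ^ i)]
end

section
/- Let A be a finite abelian group and let m_1 | m_2 in positive integers. If A contains a subgroup isomorphic to ⊕_{i=1}^r Z/ℓ_i with ℓ_1 | ℓ_2 | ... | ℓ_r and ℓ_1 ≥ m_1·m_2, and B ≤ A is a subgroup of index at most m_1, then for each i there is ℓ'_i dividing ℓ_i with ℓ_i/ℓ'_i ≤ m_1 such that ⊕_{i=1}^r Z/ℓ'_i embeds in B; in particular ℓ'_1 ≥ m_2. -/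
/-- If `A` contains `⊕ ℤ/ℓ_i` with `ℓ_1 ∣ ⋯ ∣ ℓ_r` and `ℓ_1 ≥ m₁·m₂`, and `B ≤ A` has
index at most `m₁`, then `B` contains `⊕ ℤ/ℓ'_i` with `ℓ'_i ∣ ℓ_i`, `ℓ_i/ℓ'_i ≤ m₁`, and
`ℓ'_1 ≥ m₂`. -/
theorem subgroup_of_bounded_index_retains_large_factors
    (A : Type*) [AddCommGroup A] [Finite A]
    (m₁ m₂ : ℕ) (hm₁ : 0 < m₁) (hm₂ : 0 < m₂) (hdvd : m₁ ∣ m₂)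
    (r : ℕ) (hr : 0 < r) (ℓ : Fin r → ℕ) (hℓ : ∀ i, 0 < ℓ i)
    (hchain : ∀ i j : Fin r, i ≤ j → ℓ i ∣ ℓ j)
    (hbig : m₁ * m₂ ≤ ℓ ⟨0, hr⟩)
    (e : ((i : Fin r) → ZMod (ℓ i)) →+ A) (he : Function.Injective e)
    (B : AddSubgroup A) (hB : B.index ≤ m₁) :
    ∃ ℓ' : Fin r → ℕ, (∀ i, ℓ' i ∣ ℓ i) ∧ (∀ i, ℓ i / ℓ' i ≤ m₁) ∧ m₂ ≤ ℓ' ⟨0, hr⟩ ∧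
      ∃ f : ((i : Fin r) → ZMod (ℓ' i)) →+ B, Function.Injective f := by
  classical
  set n := B.index with hn
  have hn0 : n ≠ 0 := AddSubgroup.index_ne_zero_of_finite
  have hnpos : 0 < n := Nat.pos_of_ne_zero hn0
  set g : Fin r → ℕ := fun i => Nat.gcd (ℓ i) n with hgdef
  have hgpos : ∀ i, 0 < g i := fun i => Nat.gcd_pos_of_pos_right _ hnpos
  have hgdvdℓ : ∀ i, g i ∣ ℓ i := fun i => Nat.gcd_dvd_left _ _
  have hgdvdn : ∀ i, g i ∣ n := fun i => Nat.gcd_dvd_right _ _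
  set ℓ' : Fin r → ℕ := fun i => ℓ i / g i with hℓ'def
  have hℓ'pos : ∀ i, 0 < ℓ' i := fun i => Nat.div_pos (Nat.le_of_dvd (hℓ i) (hgdvdℓ i)) (hgpos i)
  have hℓ'dvd : ∀ i, ℓ' i ∣ ℓ i := fun i => Nat.div_dvd_of_dvd (hgdvdℓ i)
  have hℓeq : ∀ i, ℓ' i * g i = ℓ i := fun i => Nat.div_mul_cancel (hgdvdℓ i)
  have hquot : ∀ i, ℓ i / ℓ' i = g i := fun i => Nat.div_div_self (hgdvdℓ i) (hℓ i).ne'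
  have hgle : ∀ i, g i ≤ m₁ := fun i => le_trans (Nat.le_of_dvd hnpos (hgdvdn i)) hB
  refine ⟨ℓ', hℓ'dvd, fun i => (hquot i) ▸ hgle i, ?_, ?_⟩
  · rw [hℓ'def]
    rw [Nat.le_div_iff_mul_le (hgpos ⟨0, hr⟩)]
    calc m₂ * g ⟨0, hr⟩ ≤ m₂ * m₁ := Nat.mul_le_mul_left _ (hgle _)
      _ = m₁ * m₂ := Nat.mul_comm _ _
      _ ≤ ℓ ⟨0, hr⟩ := hbig
  · have instNZ : ∀ i, NeZero (ℓ i) := fun i => ⟨(hℓ i).ne'⟩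
    have instNZ' : ∀ i, NeZero (ℓ' i) := fun i => ⟨(hℓ'pos i).ne'⟩
    have hφkey : ∀ i, ((ℓ' i : ℤ) : ZMod (ℓ i)) * (n : ZMod (ℓ i)) = 0 := by
      intro i
      have hd : (ℓ i) ∣ ℓ' i * n := by
        obtain ⟨n', hn'⟩ := hgdvdn i
        exact ⟨n', by rw [← hℓeq i, hn']; ring⟩
      have h2 : ((ℓ' i * n : ℕ) : ZMod (ℓ i)) = 0 :=
        (ZMod.natCast_eq_zero_iff _ _).mpr hd
      push_cast at h2 ⊢
      exact h2
    set φ : ∀ i, ℤ →+ ZMod (ℓ i) :=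
      fun i => AddMonoidHom.mk' (fun z => (z : ZMod (ℓ i)) * (n : ZMod (ℓ i)))
        (by intro a b; push_cast; ring) with hφdef
    set h : ∀ i, ZMod (ℓ' i) →+ ZMod (ℓ i) :=
      fun i => ZMod.lift (ℓ' i) ⟨φ i, hφkey i⟩ with hhdef
    have hval : ∀ i (c : ZMod (ℓ' i)), h i c = ((c.val : ℕ) : ZMod (ℓ i)) * (n : ZMod (ℓ i)) := by
      intro i c
      haveI := instNZ' i
      conv_lhs => rw [← ZMod.natCast_rightInverse c]
      rw [show ((c.val : ℕ) : ZMod (ℓ' i)) = ((c.val : ℤ) : ZMod (ℓ' i)) by push_cast; rfl]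
      rw [hhdef, ZMod.lift_coe]
      simp [hφdef]
    have hinj : ∀ i, Function.Injective (h i) := by
      intro i
      haveI := instNZ' i
      rw [injective_iff_map_eq_zero]
      intro c hc
      rw [hval] at hc
      have hdvd2 : ℓ i ∣ c.val * n := by
        have : ((c.val * n : ℕ) : ZMod (ℓ i)) = 0 := by push_cast; exact hc
        exact (ZMod.natCast_eq_zero_iff _ _).mp this
      obtain ⟨n', hn'⟩ := hgdvdn i
      have hdvd3 : ℓ' i ∣ c.val * n' := by
        have h4 : ℓ' i * g i ∣ c.val * n' * g i := by
          rw [hℓeq i]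
          calc ℓ i ∣ c.val * n := hdvd2
            _ = c.val * n' * g i := by rw [hn']; ring
        exact (Nat.mul_dvd_mul_iff_right (hgpos i)).mp h4
      have hcop : Nat.Coprime (ℓ' i) n' := by
        have hc2 := Nat.coprime_div_gcd_div_gcd (m := ℓ i) (n := n) (hgpos i)
        have hn'eq : n' = n / g i := by rw [hn', Nat.mul_div_cancel_left _ (hgpos i)]
        rw [hn'eq]; exact hc2
      have hdvdc : ℓ' i ∣ c.val := hcop.dvd_of_dvd_mul_right hdvd3
      have hc0 : c.val = 0 := Nat.eq_zero_of_dvd_of_lt hdvdc (ZMod.val_lt c) |>.symm ▸ rfl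
      exact (ZMod.val_eq_zero c).mp hc0
    -- componentwise hom
    set H : ((i : Fin r) → ZMod (ℓ' i)) →+ ((i : Fin r) → ZMod (ℓ i)) :=
      AddMonoidHom.mk' (fun x i => h i (x i)) (by intro a b; funext i; simp) with hHdef
    have hHinj : Function.Injective H := by
      intro x y hxy
      funext i
      exact hinj i (congrFun hxy i)
    have hmem : ∀ x, e (H x) ∈ B := by
      intro x
      have : H x = n • (fun i => (((x i).val : ℕ) : ZMod (ℓ i))) := by
        funext i
        simp only [hHdef, AddMonoidHom.mk'_apply, Pi.smul_apply]
        rw [hval i]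
        rw [nsmul_eq_mul]
        ring
      rw [this, map_nsmul]
      exact AddSubgroup.nsmul_index_mem B _
    refine ⟨((e.comp H).codRestrict B (fun x => hmem x)), ?_⟩
    intro x y hxy
    have : e (H x) = e (H y) := congrArg Subtype.val hxy
    exact hHinj (he this)
end
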